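/- For f ∈ L¹([-1,1]), the tail of the Gaussian-smoothed Fourier series satisfies ‖N_σ(1 - π_k)f‖_{L²} ≤ Γ_{σ,k} ‖f‖_{L¹}, where Γ_{σ,k} = (1/(σ√(2π))) e^{-σ²k²π²/2}. -/

import Mathlib

/-!
Poisson summation expands the periodized kernel as `K σ u = ½ ∑ⱼ e^{-σ²j²π²/2} e^{jπiu}`, so
`N_σ` multiplies the `j`-th Fourier coefficient by `e^{-σ²j²π²/2}`. The coefficients of
`(1 - π_k) f` vanish for `|j| ≤ k` and are bounded by `½‖f‖_{L¹}` otherwise, so those of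
`N_σ (1 - π_k) f` are absolutely summable and Parseval gives
`‖N_σ (1 - π_k) f‖² = 2 ∑_{|j|>k} e^{-σ²j²π²} |f̂ⱼ|² ≤ ½ ‖f‖₁² ∑_{|j|>k} e^{-σ²π²j²}`.
Comparing the Gaussian tail with a geometric series bounds the last sum by
`2 e^{-σ²π²k²} / (σ²π²) ≤ e^{-σ²π²k²} / (πσ²)`, which is the square of the claimed constant.
-/

open Real MeasureTheory

noncomputable def gauss (σ x : ℝ) : ℝ :=
  (1 / (σ * Real.sqrt (2 * π))) * Real.exp (-x ^ 2 / (2 * σ ^ 2))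

/-- The 2-periodized Gaussian kernel. -/
noncomputable def K (σ u : ℝ) : ℝ := ∑' j : ℤ, gauss σ (u + 2 * j)

/-- Fourier coefficient on `[-1,1]` of a complex-valued function. -/
noncomputable def Fc (f : ℝ → ℂ) (j : ℤ) : ℂ :=
  (1 / 2) * ∫ x in Set.Icc (-1 : ℝ) 1, f x * Complex.exp (-(j * π * Complex.I * x))

/-- Galerkin projection onto Fourier modes of order at most `k`. -/
noncomputable def galerkin (k : ℕ) (f : ℝ → ℂ) (x : ℝ) : ℂ :=
  ∑ j ∈ Finset.Icc (-(k : ℤ)) (k : ℤ), Fc f j * Complex.exp (j * π * Complex.I * x)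

/-- Periodized Gaussian smoothing operator acting on complex-valued functions. -/
noncomputable def Nop (σ : ℝ) (g : ℝ → ℂ) (x : ℝ) : ℂ :=
  ∫ y in Set.Icc (-1 : ℝ) 1, (K σ (x - y) : ℂ) * g y

theorem summable_exp_neg_mul_int_sq {a : ℝ} (ha : 0 < a) :
    Summable fun j : ℤ => Real.exp (-(a * (j : ℝ) ^ 2)) := by
  have hθ := ((summable_jacobiTheta₂_term_iff 0 (Complex.I * (a / π : ℝ))).mpr
    (by simpa using div_pos ha Real.pi_pos)).norm
  refine hθ.congr fun j => ?_
  rw [norm_jacobiTheta₂_term]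
  congr 1
  simp only [Complex.mul_im, Complex.I_re, Complex.I_im, Complex.ofReal_re, Complex.ofReal_im,
    Complex.zero_im]
  field_simp
  ring

theorem exp_neg_mul_sq_add_succ_le {a : ℝ} (ha : 0 ≤ a) (k n : ℕ) :
    Real.exp (-(a * ((n + (k + 1) : ℕ) : ℝ) ^ 2)) ≤
      Real.exp (-(a * (k : ℝ) ^ 2)) * Real.exp (-a) ^ (n + 1) := by
  rw [← Real.exp_nat_mul, ← Real.exp_add, Real.exp_le_exp]
  push_cast
  nlinarith [mul_nonneg ha (by positivity : (0 : ℝ) ≤ (n + 1) * (n + 2 * k))]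

theorem tsum_exp_neg_mul_sq_nat_tail_le {a : ℝ} (ha : 0 < a) (k : ℕ) :
    ∑' n : ℕ, (if n ≤ k then 0 else Real.exp (-(a * (n : ℝ) ^ 2))) ≤
      Real.exp (-(a * (k : ℝ) ^ 2)) / a := by
  set T : ℕ → ℝ := fun n => if n ≤ k then 0 else Real.exp (-(a * (n : ℝ) ^ 2))
  set q := Real.exp (-a)
  have hq : q < 1 := Real.exp_lt_one_iff.mpr (by linarith)
  have hgeom : HasSum (fun n : ℕ => Real.exp (-(a * (k : ℝ) ^ 2)) * q ^ (n + 1))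
      (Real.exp (-(a * (k : ℝ) ^ 2)) * (q * (1 - q)⁻¹)) := by
    simpa only [pow_succ', mul_assoc] using
      ((hasSum_geometric_of_lt_one (Real.exp_nonneg _) hq).mul_left q).mul_left _
  have hshift : ∀ n, T (n + (k + 1)) ≤ Real.exp (-(a * (k : ℝ) ^ 2)) * q ^ (n + 1) := by
    intro n
    simp only [T, if_neg (by omega : ¬ n + (k + 1) ≤ k)]
    exact exp_neg_mul_sq_add_succ_le ha.le k n
  have hT : Summable T := (summable_nat_add_iff (k + 1)).mp <|
    hgeom.summable.of_nonneg_of_le (fun n => by positivity) hshift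
  -- `q / (1 - q) = 1 / (e^a - 1) ≤ 1 / a`
  have hratio : q * (1 - q)⁻¹ ≤ a⁻¹ := by
    have hqa : q * Real.exp a = 1 := by rw [← Real.exp_add, neg_add_cancel, Real.exp_zero]
    rw [← div_eq_mul_inv, div_le_iff₀ (by linarith), inv_mul_eq_div, le_div_iff₀ ha]
    nlinarith [Real.add_one_le_exp a, Real.exp_pos (-a)]
  calc ∑' n, T n = ∑' n, T (n + (k + 1)) := by
        rw [← hT.sum_add_tsum_nat_add (k + 1), Finset.sum_eq_zero, zero_add]
        intro i hi
        simp [T, Nat.lt_succ_iff.mp (Finset.mem_range.mp hi)]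
    _ ≤ Real.exp (-(a * (k : ℝ) ^ 2)) * (q * (1 - q)⁻¹) :=
        hgeom.tsum_eq ▸ ((summable_nat_add_iff (k + 1)).mpr hT).tsum_le_tsum hshift hgeom.summable
    _ ≤ Real.exp (-(a * (k : ℝ) ^ 2)) / a := by
        rw [div_eq_mul_inv]; gcongr

noncomputable def gaussTail (a : ℝ) (k : ℕ) (j : ℤ) : ℝ :=
  if j.natAbs ≤ k then 0 else Real.exp (-(a * (j : ℝ) ^ 2))

theorem gaussTail_nonneg (a : ℝ) (k : ℕ) (j : ℤ) : 0 ≤ gaussTail a k j := by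
  unfold gaussTail; positivity

theorem summable_gaussTail {a : ℝ} (ha : 0 < a) (k : ℕ) : Summable (gaussTail a k) :=
  (summable_exp_neg_mul_int_sq ha).of_nonneg_of_le (gaussTail_nonneg a k) fun j => by
    unfold gaussTail; split_ifs <;> simp [Real.exp_nonneg]

theorem tsum_gaussTail_le {a : ℝ} (ha : 0 < a) (k : ℕ) :
    ∑' j, gaussTail a k j ≤ 2 * Real.exp (-(a * (k : ℝ) ^ 2)) / a := by
  have hnat : ∀ n : ℕ, gaussTail a k n + gaussTail a k (-n) =
      2 * (if n ≤ k then 0 else Real.exp (-(a * (n : ℝ) ^ 2))) := by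
    intro n
    simp only [gaussTail, Int.natAbs_neg, Int.natAbs_natCast, Int.cast_neg, Int.cast_natCast,
      neg_sq]
    split_ifs <;> ring
  have h0 : gaussTail a k 0 = 0 := if_pos (Nat.zero_le k)
  calc ∑' j, gaussTail a k j = ∑' n : ℕ, (gaussTail a k n + gaussTail a k (-n)) := by
        rw [tsum_nat_add_neg (summable_gaussTail ha k), h0, add_zero]
    _ = 2 * ∑' n : ℕ, (if n ≤ k then 0 else Real.exp (-(a * (n : ℝ) ^ 2))) := by
        simp only [hnat, tsum_mul_left]
    _ ≤ 2 * Real.exp (-(a * (k : ℝ) ^ 2)) / a := by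
        rw [mul_div_assoc]; gcongr; exact tsum_exp_neg_mul_sq_nat_tail_le ha k

noncomputable def fourierMode (j : ℤ) (x : ℝ) : ℂ := Complex.exp (j * π * Complex.I * x)

theorem norm_fourierMode (j : ℤ) (x : ℝ) : ‖fourierMode j x‖ = 1 := by
  rw [fourierMode, show (j : ℂ) * π * Complex.I * x = ((j * π * x : ℝ) : ℂ) * Complex.I by
    push_cast; ring]
  exact Complex.norm_exp_ofReal_mul_I _

@[fun_prop]
theorem continuous_fourierMode (j : ℤ) : Continuous (fourierMode j) := by
  unfold fourierMode; fun_prop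

theorem fourierMode_mul_fourierMode (j l : ℤ) (x : ℝ) :
    fourierMode j x * fourierMode l x = fourierMode (j + l) x := by
  simp only [fourierMode, ← Complex.exp_add]; push_cast; ring_nf

theorem fourierMode_sub (j : ℤ) (x y : ℝ) :
    fourierMode j (x - y) = fourierMode j x * fourierMode (-j) y := by
  simp only [fourierMode, ← Complex.exp_add]; push_cast; ring_nf

theorem conj_fourierMode (j : ℤ) (x : ℝ) :
    starRingEnd ℂ (fourierMode j x) = fourierMode (-j) x := by
  simp only [fourierMode, ← Complex.exp_conj, map_mul, Complex.conj_I, Complex.conj_ofReal,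
    map_intCast]
  push_cast; ring_nf

theorem integral_fourierMode (j : ℤ) :
    ∫ x in Set.Icc (-1 : ℝ) 1, fourierMode j x = if j = 0 then 2 else 0 := by
  rw [integral_Icc_eq_integral_Ioc, ← intervalIntegral.integral_of_le (by norm_num)]
  split_ifs with hj
  · norm_num [hj, fourierMode]
  have hc : (j : ℂ) * π * Complex.I ≠ 0 := by simp [hj, Real.pi_ne_zero]
  -- the endpoint values `e^{±jπi}` agree, their quotient being `e^{2jπi} = 1`
  have hperiod : Complex.exp ((j : ℂ) * π * Complex.I * (1 : ℝ)) =
      Complex.exp ((j : ℂ) * π * Complex.I * (-1 : ℝ)) := by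
    rw [← mul_one (Complex.exp (_ * ((-1 : ℝ) : ℂ))), ← Complex.exp_int_mul_two_pi_mul_I j,
      ← Complex.exp_add]
    push_cast; ring_nf
  simp only [fourierMode]
  rw [integral_exp_mul_complex hc, hperiod, sub_self, zero_div]

theorem Fc_eq_integral_mul_fourierMode (f : ℝ → ℂ) (j : ℤ) :
    Fc f j = (1 / 2) * ∫ x in Set.Icc (-1 : ℝ) 1, f x * fourierMode (-j) x := by
  simp only [Fc, fourierMode, Int.cast_neg, neg_mul]

theorem norm_Fc_le (f : ℝ → ℂ) (j : ℤ) :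
    ‖Fc f j‖ ≤ (1 / 2) * ∫ x in Set.Icc (-1 : ℝ) 1, ‖f x‖ := by
  rw [Fc_eq_integral_mul_fourierMode, norm_mul, norm_div, norm_one, Complex.norm_ofNat]
  gcongr
  refine (norm_integral_le_integral_norm _).trans_eq ?_
  simp only [norm_mul, norm_fourierMode, mul_one]

theorem integrableOn_mul_fourierMode {f : ℝ → ℂ} (hf : IntegrableOn f (Set.Icc (-1) 1))
    (j : ℤ) :
    IntegrableOn (fun x => f x * fourierMode j x) (Set.Icc (-1) 1) :=
  Integrable.mul_bdd hf (continuous_fourierMode j).aestronglyMeasurable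
    (ae_of_all _ fun x => (norm_fourierMode j x).le)

theorem Fc_sub {f g : ℝ → ℂ} (hf : IntegrableOn f (Set.Icc (-1) 1))
    (hg : IntegrableOn g (Set.Icc (-1) 1)) (j : ℤ) :
    Fc (fun x => f x - g x) j = Fc f j - Fc g j := by
  simp only [Fc_eq_integral_mul_fourierMode, sub_mul]
  rw [integral_sub (integrableOn_mul_fourierMode hf _) (integrableOn_mul_fourierMode hg _),
    mul_sub]

theorem integral_tsum_mul_of_norm_le {ι α 𝕜 : Type*} [Countable ι] [MeasurableSpace α]
    [RCLike 𝕜] {μ : Measure α} {φ : ι → α → 𝕜} {b : ι → ℝ} {g : α → 𝕜}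
    (hφ : ∀ i, AEStronglyMeasurable (φ i) μ) (hφb : ∀ i x, ‖φ i x‖ ≤ b i) (hb : Summable b)
    (hg : Integrable g μ) :
    ∫ x, (∑' i, φ i x) * g x ∂μ = ∑' i, ∫ x, φ i x * g x ∂μ := by
  have hint : ∀ i, Integrable (fun x => φ i x * g x) μ :=
    fun i => hg.bdd_mul (hφ i) (ae_of_all _ (hφb i))
  have hnorm : ∀ i, ∫ x, ‖φ i x * g x‖ ∂μ ≤ b i * ∫ x, ‖g x‖ ∂μ := by
    intro i
    rw [← integral_const_mul]
    refine integral_mono (hint i).norm (hg.norm.const_mul _) fun x => ?_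
    rw [norm_mul]
    exact mul_le_mul_of_nonneg_right (hφb i x) (norm_nonneg _)
  simp_rw [← tsum_mul_right]
  exact (integral_tsum_of_summable_integral_norm hint <| (hb.mul_right _).of_nonneg_of_le
    (fun i => integral_nonneg fun _ => norm_nonneg _) hnorm).symm

theorem Fc_tsum_mul_fourierMode {c : ℤ → ℂ} (hc : Summable fun j => ‖c j‖) (l : ℤ) :
    Fc (fun x => ∑' j, c j * fourierMode j x) l = c l := by
  rw [Fc_eq_integral_mul_fourierMode, integral_tsum_mul_of_norm_le (b := fun j => ‖c j‖)
    (fun j => by fun_prop) (fun j x => by simp [norm_fourierMode]) hc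
    (continuous_fourierMode _).integrableOn_Icc]
  simp_rw [mul_assoc, fourierMode_mul_fourierMode, integral_const_mul, integral_fourierMode,
    ← sub_eq_add_neg, sub_eq_zero]
  rw [tsum_eq_single l fun j hj => by simp [hj], if_pos rfl]
  ring

theorem integral_norm_sq_tsum_mul_fourierMode {c : ℤ → ℂ} (hc : Summable fun j => ‖c j‖) :
    ∫ x in Set.Icc (-1 : ℝ) 1, ‖∑' j, c j * fourierMode j x‖ ^ 2 = 2 * ∑' j, ‖c j‖ ^ 2 := by
  set h : ℝ → ℂ := fun x => ∑' j, c j * fourierMode j x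
  have hbound : ∀ j x, ‖c j * fourierMode j x‖ ≤ ‖c j‖ := by simp [norm_fourierMode]
  have hh : IntegrableOn h (Set.Icc (-1) 1) :=
    (continuous_tsum (fun j => by fun_prop) hc hbound).integrableOn_Icc
  have hconj : ∀ x, starRingEnd ℂ (h x) = ∑' j, starRingEnd ℂ (c j) * fourierMode (-j) x := by
    intro x
    simp only [h, Complex.conj_tsum, map_mul, conj_fourierMode]
  suffices ((∫ x in Set.Icc (-1 : ℝ) 1, ‖h x‖ ^ 2 : ℝ) : ℂ) = ((2 * ∑' j, ‖c j‖ ^ 2 : ℝ) : ℂ) from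
    Complex.ofReal_injective this
  calc ((∫ x in Set.Icc (-1 : ℝ) 1, ‖h x‖ ^ 2 : ℝ) : ℂ)
      = ∫ x in Set.Icc (-1 : ℝ) 1, (∑' j, starRingEnd ℂ (c j) * fourierMode (-j) x) * h x := by
        refine integral_ofReal.symm.trans ?_
        simp only [← hconj, Complex.conj_mul']
        norm_cast
    _ = ∑' j, starRingEnd ℂ (c j) * (2 * Fc h j) := by
        rw [integral_tsum_mul_of_norm_le (b := fun j => ‖c j‖) (fun j => by fun_prop)
          (fun j x => by simp [norm_fourierMode]) hc hh]
        simp_rw [Fc_eq_integral_mul_fourierMode, mul_assoc, integral_const_mul, mul_comm (h _)]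
        ring_nf
    _ = ((2 * ∑' j, ‖c j‖ ^ 2 : ℝ) : ℂ) := by
        simp only [h, Fc_tsum_mul_fourierMode hc, Complex.ofReal_mul, Complex.ofReal_tsum,
          Complex.ofReal_pow, Complex.ofReal_ofNat, ← Complex.conj_mul', ← tsum_mul_left]
        congr with j
        ring

noncomputable def gaussMultiplier (σ : ℝ) (j : ℤ) : ℝ :=
  Real.exp (-(σ ^ 2 * (j : ℝ) ^ 2 * π ^ 2 / 2))

theorem gaussMultiplier_pos (σ : ℝ) (j : ℤ) : 0 < gaussMultiplier σ j := Real.exp_pos _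

theorem gaussMultiplier_sq (σ : ℝ) (j : ℤ) :
    gaussMultiplier σ j ^ 2 = Real.exp (-(σ ^ 2 * π ^ 2 * (j : ℝ) ^ 2)) := by
  rw [gaussMultiplier, ← Real.exp_nat_mul]
  ring_nf

theorem summable_gaussMultiplier {σ : ℝ} (hσ : 0 < σ) : Summable (gaussMultiplier σ) :=
  (summable_exp_neg_mul_int_sq (a := σ ^ 2 * π ^ 2 / 2) (by positivity)).congr fun j => by
    rw [gaussMultiplier]; ring_nf

theorem K_eq_tsum {σ : ℝ} (hσ : 0 < σ) (u : ℝ) :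
    (K σ u : ℂ) = (1 / 2) * ∑' j : ℤ, (gaussMultiplier σ j : ℂ) * fourierMode j u := by
  set a : ℂ := ((σ ^ 2 * π / 2 : ℝ) : ℂ)
  have ha : 0 < a.re := by simp only [a, Complex.ofReal_re]; positivity
  have hsqrt : a ^ (1 / 2 : ℂ) = ((σ * √(2 * π) / 2 : ℝ) : ℂ) := by
    rw [show (1 / 2 : ℂ) = ((1 / 2 : ℝ) : ℂ) by norm_num, ← Complex.ofReal_cpow (by positivity),
      ← Real.sqrt_eq_rpow, show σ ^ 2 * π / 2 = (σ * √(2 * π) / 2) ^ 2 by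
        rw [div_pow, mul_pow, Real.sq_sqrt (by positivity)]; ring,
      Real.sqrt_sq (by positivity)]
  have hpoisson := Complex.tsum_exp_neg_quadratic ha (-Complex.I * u / 2)
  have hmodes : ∑' n : ℤ, Complex.exp (-π * a * n ^ 2 + 2 * π * (-Complex.I * u / 2) * n) =
      ∑' j : ℤ, (gaussMultiplier σ j : ℂ) * fourierMode j u := by
    rw [← (Equiv.neg ℤ).tsum_eq]
    congr with n
    simp only [Equiv.neg_apply, gaussMultiplier, fourierMode, Complex.ofReal_exp, a,
      ← Complex.exp_add]
    push_cast
    ring_nf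
  have htranslates : ∑' n : ℤ, Complex.exp (-π / a * (n + Complex.I * (-Complex.I * u / 2)) ^ 2) =
      ((∑' n : ℤ, Real.exp (-(u + 2 * n) ^ 2 / (2 * σ ^ 2)) : ℝ) : ℂ) := by
    rw [Complex.ofReal_tsum]
    congr with n
    have hIb : Complex.I * (-Complex.I * u / 2) = u / 2 := by
      rw [← mul_div_assoc, ← mul_assoc, mul_neg, Complex.I_mul_I, neg_neg, one_mul]
    have : (σ : ℂ) ≠ 0 := by exact_mod_cast hσ.ne'
    simp only [a, Complex.ofReal_exp, hIb]
    congr 1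
    push_cast
    field_simp
    ring
  have hK : (K σ u : ℂ) = ((1 / (σ * √(2 * π)) : ℝ) : ℂ) *
      ((∑' n : ℤ, Real.exp (-(u + 2 * n) ^ 2 / (2 * σ ^ 2)) : ℝ) : ℂ) := by
    rw [K, ← Complex.ofReal_mul, ← tsum_mul_left]
    rfl
  have hσπ : σ * √(2 * π) ≠ 0 := by positivity
  rw [hK, ← htranslates, ← hmodes, hpoisson, hsqrt, ← mul_assoc]
  congr 1
  push_cast
  field_simp

theorem Nop_eq_tsum {σ : ℝ} (hσ : 0 < σ) {g : ℝ → ℂ} (hg : IntegrableOn g (Set.Icc (-1) 1))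
    (x : ℝ) : Nop σ g x = ∑' j : ℤ, (gaussMultiplier σ j * Fc g j) * fourierMode j x := by
  simp only [Nop, K_eq_tsum hσ, ← tsum_mul_left]
  rw [integral_tsum_mul_of_norm_le (b := fun j => gaussMultiplier σ j / 2) (fun j => by fun_prop)
    (fun j y => ?_) ((summable_gaussMultiplier hσ).div_const 2) hg]
  · refine tsum_congr fun j => ?_
    simp_rw [fourierMode_sub, Fc_eq_integral_mul_fourierMode, ← integral_const_mul]
    rw [← integral_mul_const]
    congr 1
    ext y
    ring
  · simp [norm_fourierMode, abs_of_pos (gaussMultiplier_pos σ j), inv_mul_eq_div]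

theorem integral_norm_sq_Nop_eq {σ : ℝ} (hσ : 0 < σ) {g : ℝ → ℂ}
    (hg : IntegrableOn g (Set.Icc (-1) 1)) :
    ∫ x in Set.Icc (-1 : ℝ) 1, ‖Nop σ g x‖ ^ 2 =
      2 * ∑' j : ℤ, ‖(gaussMultiplier σ j : ℂ) * Fc g j‖ ^ 2 := by
  simp_rw [Nop_eq_tsum hσ hg]
  refine integral_norm_sq_tsum_mul_fourierMode <| ((summable_gaussMultiplier hσ).mul_right
    ((1 / 2) * ∫ x in Set.Icc (-1 : ℝ) 1, ‖g x‖)).of_nonneg_of_le (fun j => norm_nonneg _)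
    fun j => ?_
  rw [norm_mul, Complex.norm_real, Real.norm_of_nonneg (gaussMultiplier_pos σ j).le]
  exact mul_le_mul_of_nonneg_left (norm_Fc_le g j) (gaussMultiplier_pos σ j).le

theorem continuous_galerkin (k : ℕ) (f : ℝ → ℂ) : Continuous (galerkin k f) := by
  unfold galerkin; fun_prop

theorem galerkin_eq_tsum (k : ℕ) (f : ℝ → ℂ) (x : ℝ) :
    galerkin k f x =
      ∑' j : ℤ, (if j ∈ Finset.Icc (-(k : ℤ)) k then Fc f j else 0) * fourierMode j x := by
  rw [tsum_eq_sum (s := Finset.Icc (-(k : ℤ)) k) fun j hj => by simp [hj]]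
  exact Finset.sum_congr rfl fun j hj => by rw [if_pos hj]; rfl

theorem Fc_galerkin (k : ℕ) (f : ℝ → ℂ) (j : ℤ) :
    Fc (galerkin k f) j = if j ∈ Finset.Icc (-(k : ℤ)) k then Fc f j else 0 := by
  rw [funext (galerkin_eq_tsum k f)]
  refine Fc_tsum_mul_fourierMode (summable_of_ne_finset_zero (s := Finset.Icc (-(k : ℤ)) k)
    fun l hl => by simp [hl]) j

theorem Fc_sub_galerkin {f : ℝ → ℂ} (hf : IntegrableOn f (Set.Icc (-1) 1)) (k : ℕ) (j : ℤ) :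
    Fc (fun y => f y - galerkin k f y) j = if j.natAbs ≤ k then 0 else Fc f j := by
  rw [Fc_sub hf (continuous_galerkin k f).integrableOn_Icc, Fc_galerkin]
  have : j ∈ Finset.Icc (-(k : ℤ)) k ↔ j.natAbs ≤ k := by rw [Finset.mem_Icc]; omega
  split_ifs <;> simp_all

theorem tsum_norm_sq_gaussMultiplier_mul_Fc_sub_galerkin_le {σ : ℝ} (hσ : 0 < σ) {f : ℝ → ℂ}
    (hf : IntegrableOn f (Set.Icc (-1) 1)) (k : ℕ) :
    ∑' j : ℤ, ‖(gaussMultiplier σ j : ℂ) * Fc (fun y => f y - galerkin k f y) j‖ ^ 2 ≤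
      ((∫ x in Set.Icc (-1 : ℝ) 1, ‖f x‖) / 2) ^ 2 *
        (2 * Real.exp (-(σ ^ 2 * π ^ 2 * (k : ℝ) ^ 2)) / (σ ^ 2 * π ^ 2)) := by
  have ha : 0 < σ ^ 2 * π ^ 2 := by positivity
  have hcoeff : ∀ j, ‖(gaussMultiplier σ j : ℂ) * Fc (fun y => f y - galerkin k f y) j‖ ^ 2 ≤
      ((∫ x in Set.Icc (-1 : ℝ) 1, ‖f x‖) / 2) ^ 2 * gaussTail (σ ^ 2 * π ^ 2) k j := by
    intro j
    rw [Fc_sub_galerkin hf, norm_mul, mul_pow, Complex.norm_real, Real.norm_eq_abs, sq_abs,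
      gaussMultiplier_sq, gaussTail]
    split_ifs
    · simp
    · rw [mul_comm]
      gcongr
      simpa [div_eq_inv_mul] using norm_Fc_le f j
  have hsummable :=
    (summable_gaussTail ha k).mul_left (((∫ x in Set.Icc (-1 : ℝ) 1, ‖f x‖) / 2) ^ 2)
  calc _ ≤ ∑' j, ((∫ x in Set.Icc (-1 : ℝ) 1, ‖f x‖) / 2) ^ 2 * gaussTail (σ ^ 2 * π ^ 2) k j :=
        (hsummable.of_nonneg_of_le (fun _ => by positivity) hcoeff).tsum_le_tsum hcoeff hsummable
    _ ≤ _ := by rw [tsum_mul_left]; gcongr; exact tsum_gaussTail_le ha k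

theorem tail_estimate (σ : ℝ) (hσ : 0 < σ) (k : ℕ) (f : ℝ → ℂ)
    (hf : IntegrableOn f (Set.Icc (-1) 1)) :
    Real.sqrt (∫ x in Set.Icc (-1 : ℝ) 1, ‖Nop σ (fun y => f y - galerkin k f y) x‖ ^ 2) ≤
      (1 / (σ * Real.sqrt (2 * π))) * Real.exp (-(σ ^ 2 * (k : ℝ) ^ 2 * π ^ 2 / 2)) *
        ∫ x in Set.Icc (-1 : ℝ) 1, ‖f x‖ := by
  set L := ∫ x in Set.Icc (-1 : ℝ) 1, ‖f x‖
  have hE : Real.exp (-(σ ^ 2 * (k : ℝ) ^ 2 * π ^ 2 / 2)) ^ 2 =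
      Real.exp (-(σ ^ 2 * π ^ 2 * (k : ℝ) ^ 2)) := by
    rw [← Real.exp_nat_mul]; ring_nf
  rw [Real.sqrt_le_left (by positivity), integral_norm_sq_Nop_eq hσ
    (g := fun y => f y - galerkin k f y) (hf.sub (continuous_galerkin k f).integrableOn_Icc)]
  calc _ ≤ 2 * ((L / 2) ^ 2 *
          (2 * Real.exp (-(σ ^ 2 * π ^ 2 * (k : ℝ) ^ 2)) / (σ ^ 2 * π ^ 2))) := by
        gcongr; exact tsum_norm_sq_gaussMultiplier_mul_Fc_sub_galerkin_le hσ hf k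
    _ ≤ _ := by
        rw [mul_pow, mul_pow, hE, one_div, inv_pow, mul_pow, Real.sq_sqrt (by positivity)]
        field_simp
        nlinarith [Real.pi_gt_three, sq_nonneg L]
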